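/- Let μ be a product probability distribution on X_1 × ... × X_n and let σ be a probability distribution on the same space with KL divergence D(σ‖μ) ≤ t. Then Σ_i H(X_i)_σ - H(X)_σ ≤ 2t, i.e., the total correlation of σ is at most 2t. -/

import Mathlib

/-- Kullback–Leibler divergence (base 2) between distributions on a finite set,
with the convention `0 · log(0/μ(x)) = 0` (automatic since `0 * x = 0`). -/
noncomputable def klDiv' {A : Type*} [Fintype A] (σ μ : A → ℝ) : ℝ :=
  ∑ x, σ x * Real.logb 2 (σ x / μ x)

/-- Shannon entropy (base 2) of a distribution on a finite set. -/
noncomputable def shannonEnt {A : Type*} [Fintype A] (ρ : A → ℝ) : ℝ :=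
  -∑ x, ρ x * Real.logb 2 (ρ x)

open Finset in
/-- Gibbs' inequality (natural log version). -/
lemma gibbs_aux {A : Type*} [Fintype A] (f g : A → ℝ) (hf : ∀ x, 0 ≤ f x)
    (hg : ∀ x, 0 ≤ g x) (hfg : ∀ x, g x = 0 → f x = 0)
    (hf1 : ∑ x, f x = 1) (hg1 : ∑ x, g x ≤ 1) :
    0 ≤ ∑ x, f x * Real.log (f x / g x) := by
  have key : ∀ x, f x * Real.log (g x / f x) ≤ g x - f x := by
    intro x
    rcases eq_or_lt_of_le (hf x) with h | h
    · simp [← h, hg x]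
    · have hgx : 0 < g x := by
        rcases eq_or_lt_of_le (hg x) with h' | h'
        · exact absurd (hfg x h'.symm) (by positivity)
        · exact h'
      have hlog : Real.log (g x / f x) ≤ g x / f x - 1 :=
        Real.log_le_sub_one_of_pos (by positivity)
      calc f x * Real.log (g x / f x) ≤ f x * (g x / f x - 1) := by
            exact mul_le_mul_of_nonneg_left hlog (le_of_lt h)
        _ = g x - f x := by field_simp
  have hsum : ∑ x, f x * Real.log (g x / f x) ≤ 0 := by
    calc ∑ x, f x * Real.log (g x / f x) ≤ ∑ x, (g x - f x) :=
          Finset.sum_le_sum fun x _ => key x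
      _ = (∑ x, g x) - 1 := by rw [Finset.sum_sub_distrib, hf1]
      _ ≤ 0 := by linarith
  have heq : ∀ x, f x * Real.log (f x / g x) = -(f x * Real.log (g x / f x)) := by
    intro x
    rcases eq_or_lt_of_le (hf x) with h | h
    · simp [← h]
    · have hgx : 0 < g x := by
        rcases eq_or_lt_of_le (hg x) with h' | h'
        · exact absurd (hfg x h'.symm) (by positivity)
        · exact h'
      rw [Real.log_div (ne_of_gt h) (ne_of_gt hgx), Real.log_div (ne_of_gt hgx) (ne_of_gt h)]
      ring
  calc (0:ℝ) ≤ -∑ x, f x * Real.log (g x / f x) := by linarith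
    _ = ∑ x, f x * Real.log (f x / g x) := by
        rw [← Finset.sum_neg_distrib]
        exact Finset.sum_congr rfl fun x _ => (heq x).symm

theorem stmt6 (n : ℕ) (X : Fin n → Type) [∀ i, Fintype (X i)] [∀ i, DecidableEq (X i)]
    (μi : ∀ i, X i → ℝ) (hμnn : ∀ i a, 0 ≤ μi i a) (hμ1 : ∀ i, ∑ a, μi i a = 1)
    (σ : (∀ i, X i) → ℝ) (hσnn : ∀ x, 0 ≤ σ x) (hσ1 : ∑ x, σ x = 1)
    (habs : ∀ x, (∏ i, μi i (x i)) = 0 → σ x = 0)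
    (t : ℝ) (ht : klDiv' σ (fun x => ∏ i, μi i (x i)) ≤ t) :
    (∑ i, shannonEnt (fun a => ∑ x, if x i = a then σ x else 0)) - shannonEnt σ ≤ 2 * t := by
  classical
  set σi : ∀ i, X i → ℝ := fun i a => ∑ x, if x i = a then σ x else 0 with hσidef
  set π : (∀ i, X i) → ℝ := fun x => ∏ i, σi i (x i) with hπdef
  set μ : (∀ i, X i) → ℝ := fun x => ∏ i, μi i (x i) with hμdef
  have hσinn : ∀ i a, 0 ≤ σi i a := fun i a =>
    Finset.sum_nonneg fun x _ => by split <;> simp [hσnn x]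
  -- marginal of any function
  have hmarg : ∀ (i : Fin n) (h : X i → ℝ),
      ∑ x, σ x * h (x i) = ∑ a, σi i a * h a := by
    intro i h
    simp only [hσidef, Finset.sum_mul, ite_mul, zero_mul]
    rw [Finset.sum_comm]
    refine Finset.sum_congr rfl fun x _ => ?_
    simp
  have hσi1 : ∀ i, ∑ a, σi i a = 1 := by
    intro i
    have := hmarg i (fun _ => 1)
    simpa [hσ1] using this.symm
  -- σ x ≤ σi i (x i)
  have hσle : ∀ (x : ∀ i, X i) (i : Fin n), σ x ≤ σi i (x i) := by
    intro x i
    have h := Finset.single_le_sum (f := fun y => if y i = x i then σ y else 0)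
      (fun y _ => by split <;> simp [hσnn y]) (Finset.mem_univ x)
    simpa using h
  have hπnn : ∀ x, 0 ≤ π x := fun x => Finset.prod_nonneg fun i _ => hσinn i (x i)
  have hμnn' : ∀ x, 0 ≤ μ x := fun x => Finset.prod_nonneg fun i _ => hμnn i (x i)
  -- positivity facts when σ x > 0
  have hσipos : ∀ x, 0 < σ x → ∀ i, 0 < σi i (x i) :=
    fun x hx i => lt_of_lt_of_le hx (hσle x i)
  have hμipos : ∀ x, 0 < σ x → ∀ i, 0 < μi i (x i) := by
    intro x hx i
    rcases eq_or_lt_of_le (hμnn i (x i)) with h | h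
    · exfalso
      have : μ x = 0 := Finset.prod_eq_zero (Finset.mem_univ i) h.symm
      exact absurd (habs x this) (by positivity)
    · exact h
  -- abs continuity σ ≪ π
  have habsπ : ∀ x, π x = 0 → σ x = 0 := by
    intro x hx
    by_contra h
    have hσx : 0 < σ x := lt_of_le_of_ne (hσnn x) (Ne.symm h)
    have : π x ≠ 0 := ne_of_gt (Finset.prod_pos fun i _ => hσipos x hσx i)
    exact this hx
  -- ∑ π = 1
  have hπ1 : ∑ x, π x = 1 := by
    have h := Finset.prod_univ_sum (κ := X) (fun i => (Finset.univ : Finset (X i)))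
      (fun i a => σi i a)
    rw [Fintype.piFinset_univ] at h
    rw [hπdef]
    simp only [← h]
    simp [hσi1]
  -- key pointwise decomposition
  have hpoint : ∀ x, σ x * Real.log (σ x / π x)
      = σ x * Real.log (σ x / μ x)
        - ∑ i, σ x * Real.log (σi i (x i) / μi i (x i)) := by
    intro x
    rcases eq_or_lt_of_le (hσnn x) with h | h
    · simp [← h]
    · have hσp := hσipos x h
      have hμp := hμipos x h
      have hπx : (0:ℝ) < π x := Finset.prod_pos fun i _ => hσp i
      have hμx : (0:ℝ) < μ x := Finset.prod_pos fun i _ => hμp i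
      have l1 : Real.log (π x) = ∑ i, Real.log (σi i (x i)) := by
        rw [hπdef]; exact Real.log_prod fun i _ => ne_of_gt (hσp i)
      have l2 : Real.log (μ x) = ∑ i, Real.log (μi i (x i)) := by
        rw [hμdef]; exact Real.log_prod fun i _ => ne_of_gt (hμp i)
      rw [Real.log_div (ne_of_gt h) (ne_of_gt hπx), Real.log_div (ne_of_gt h) (ne_of_gt hμx),
        l1, l2]
      have l3 : ∀ i : Fin n, Real.log (σi i (x i) / μi i (x i))
          = Real.log (σi i (x i)) - Real.log (μi i (x i)) :=
        fun i => Real.log_div (ne_of_gt (hσp i)) (ne_of_gt (hμp i))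
      simp only [l3]
      rw [← Finset.mul_sum, Finset.sum_sub_distrib]
      ring
  -- the cross-term equals sum of marginal KLs
  have hcross : ∑ x, ∑ i, σ x * Real.log (σi i (x i) / μi i (x i))
      = ∑ i, ∑ a, σi i a * Real.log (σi i a / μi i a) := by
    rw [Finset.sum_comm]
    exact Finset.sum_congr rfl fun i _ =>
      hmarg i (fun a => Real.log (σi i a / μi i a))
  -- marginal abs continuity
  have habsᵢ : ∀ (i : Fin n) (a : X i), μi i a = 0 → σi i a = 0 := by
    intro i a ha
    rw [hσidef]
    refine Finset.sum_eq_zero fun x _ => ?_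
    split
    · next hxa =>
      apply habs
      exact Finset.prod_eq_zero (Finset.mem_univ i) (by rw [hxa, ha])
    · rfl
  -- each marginal KL is nonneg
  have hmargKL : ∀ i : Fin n, 0 ≤ ∑ a, σi i a * Real.log (σi i a / μi i a) :=
    fun i => gibbs_aux _ _ (hσinn i) (hμnn i) (habsᵢ i) (hσi1 i) (le_of_eq (hμ1 i))
  -- main inequality in natural log
  have hmain : ∑ x, σ x * Real.log (σ x / π x) ≤ ∑ x, σ x * Real.log (σ x / μ x) := by
    calc ∑ x, σ x * Real.log (σ x / π x)
        = ∑ x, σ x * Real.log (σ x / μ x)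
          - ∑ x, ∑ i, σ x * Real.log (σi i (x i) / μi i (x i)) := by
          rw [← Finset.sum_sub_distrib]
          exact Finset.sum_congr rfl fun x _ => hpoint x
      _ ≤ ∑ x, σ x * Real.log (σ x / μ x) := by
          rw [hcross]
          have : 0 ≤ ∑ i, ∑ a, σi i a * Real.log (σi i a / μi i a) :=
            Finset.sum_nonneg fun i _ => hmargKL i
          linarith
  -- klDiv' in natural log form
  have hkl : klDiv' σ μ = (∑ x, σ x * Real.log (σ x / μ x)) / Real.log 2 := by
    simp [klDiv', Real.logb, Finset.sum_div, mul_div_assoc]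
  -- entropy difference equals nat-log KL w.r.t. π, divided by log 2
  have hent : (∑ i, shannonEnt (σi i)) - shannonEnt σ
      = (∑ x, σ x * Real.log (σ x / π x)) / Real.log 2 := by
    have hlogπ : ∀ x, σ x * Real.log (σ x / π x)
        = σ x * Real.log (σ x) - ∑ i, σ x * Real.log (σi i (x i)) := by
      intro x
      rcases eq_or_lt_of_le (hσnn x) with h | h
      · simp [← h]
      · have hσp := hσipos x h
        have hπx : (0:ℝ) < π x := Finset.prod_pos fun i _ => hσp i
        rw [Real.log_div (ne_of_gt h) (ne_of_gt hπx)]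
        have l1 : Real.log (π x) = ∑ i, Real.log (σi i (x i)) := by
          rw [hπdef]; exact Real.log_prod fun i _ => ne_of_gt (hσp i)
        rw [l1, ← Finset.mul_sum]
        ring
    have hsum : ∑ x, σ x * Real.log (σ x / π x)
        = (∑ x, σ x * Real.log (σ x)) - ∑ i, ∑ a, σi i a * Real.log (σi i a) := by
      calc ∑ x, σ x * Real.log (σ x / π x)
          = ∑ x, (σ x * Real.log (σ x) - ∑ i, σ x * Real.log (σi i (x i))) :=
            Finset.sum_congr rfl fun x _ => hlogπ x
        _ = (∑ x, σ x * Real.log (σ x)) - ∑ x, ∑ i, σ x * Real.log (σi i (x i)) := by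
            rw [Finset.sum_sub_distrib]
        _ = (∑ x, σ x * Real.log (σ x)) - ∑ i, ∑ a, σi i a * Real.log (σi i a) := by
            rw [Finset.sum_comm]
            congr 1
            exact Finset.sum_congr rfl fun i _ => hmarg i (fun a => Real.log (σi i a))
    have hEnt : ∀ {A : Type} [Fintype A] (ρ : A → ℝ),
        shannonEnt ρ = -(∑ x, ρ x * Real.log (ρ x)) / Real.log 2 := by
      intro A _ ρ
      simp [shannonEnt, Real.logb, neg_div, Finset.sum_div, mul_div_assoc]
    rw [hsum]
    simp only [hEnt]
    rw [← Finset.sum_div]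
    field_simp
    simp only [Finset.sum_neg_distrib]
    ring
  -- nonnegativity of KL w.r.t. μ
  have hKLnn : 0 ≤ ∑ x, σ x * Real.log (σ x / μ x) :=
    gibbs_aux σ μ hσnn hμnn' habs hσ1 (by
      have h := Finset.prod_univ_sum (κ := X) (fun i => (Finset.univ : Finset (X i)))
        (fun i a => μi i a)
      rw [Fintype.piFinset_univ] at h
      rw [hμdef]
      simp only [← h]
      simp [hμ1])
  have hlog2 : (0:ℝ) < Real.log 2 := Real.log_pos (by norm_num)
  have ht' : (∑ x, σ x * Real.log (σ x / μ x)) / Real.log 2 ≤ t := by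
    rw [← hkl]; exact ht
  have htnn : 0 ≤ t := le_trans (by positivity) ht'
  calc (∑ i, shannonEnt (σi i)) - shannonEnt σ
      = (∑ x, σ x * Real.log (σ x / π x)) / Real.log 2 := hent
    _ ≤ (∑ x, σ x * Real.log (σ x / μ x)) / Real.log 2 :=
        (div_le_div_iff_of_pos_right hlog2).mpr hmain
    _ ≤ t := ht'
    _ ≤ 2 * t := by linarith
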